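/- Let G be a non-complete graph with exactly two moplexes U and W. Then U and W are disjoint, and both are simplicial moplexes, i.e., N(U) and N(W) are cliques. -/

import Mathlib

open SimpleGraph

namespace MoplexPaper

variable {V : Type*}

/-- Reachability in `G - S`: a walk from `u` to `v` all of whose vertices avoid `S`. -/
def ReachOutside (G : SimpleGraph V) (S : Set V) (u v : V) : Prop :=
  ∃ p : G.Walk u v, ∀ x ∈ p.support, x ∉ S

/-- `S` is a `u,v`-separator. -/
def IsSeparator (G : SimpleGraph V) (u v : V) (S : Set V) : Prop :=
  ¬ G.Adj u v ∧ u ∉ S ∧ v ∉ S ∧ ¬ ReachOutside G S u v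

/-- `S` is a minimal `u,v`-separator. -/
def IsMinSeparator (G : SimpleGraph V) (u v : V) (S : Set V) : Prop :=
  IsSeparator G u v S ∧ ∀ T ⊂ S, ¬ IsSeparator G u v T

/-- `S` is a minimal separator of `G`. -/
def IsMinimalSeparator (G : SimpleGraph V) (S : Set V) : Prop :=
  ∃ u v, u ≠ v ∧ IsMinSeparator G u v S

/-- The (open) neighbourhood of a set of vertices. -/
def setNbhd (G : SimpleGraph V) (X : Set V) : Set V :=
  {v | v ∉ X ∧ ∃ x ∈ X, G.Adj v x}

/-- The closed neighbourhood of a vertex. -/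
def closedNbhd (G : SimpleGraph V) (v : V) : Set V :=
  insert v (G.neighborSet v)

/-- `M` is a module of `G`. -/
def IsModule (G : SimpleGraph V) (M : Set V) : Prop :=
  ∀ v ∉ M, (∀ x ∈ M, G.Adj v x) ∨ (∀ x ∈ M, ¬ G.Adj v x)

/-- `M` is a clique module of `G`. -/
def IsCliqueModule (G : SimpleGraph V) (M : Set V) : Prop :=
  G.IsClique M ∧ IsModule G M

/-- `X` is a moplex of `G`: an inclusion-maximal clique module whose
neighbourhood is empty or a minimal separator. -/
def IsMoplex (G : SimpleGraph V) (X : Set V) : Prop :=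
  X.Nonempty ∧ IsCliqueModule G X ∧
  (∀ Y, X ⊆ Y → IsCliqueModule G Y → Y = X) ∧
  (setNbhd G X = ∅ ∨ IsMinimalSeparator G (setNbhd G X))

/-- A vertex is moplicial if it belongs to a moplex. -/
def Moplicial (G : SimpleGraph V) (v : V) : Prop := ∃ X, IsMoplex G X ∧ v ∈ X

/-- An extension of `v`: an induced `P₃` with midpoint `v`. -/
def IsExtension (G : SimpleGraph V) (v a b : V) : Prop :=
  a ≠ b ∧ G.Adj v a ∧ G.Adj v b ∧ ¬ G.Adj a b

/-- A cycle is induced if the only edges of `G` among its vertices are its own edges. -/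
def IsInducedCycle (G : SimpleGraph V) {w : V} (c : G.Walk w w) : Prop :=
  c.IsCycle ∧ ∀ x ∈ c.support, ∀ y ∈ c.support, G.Adj x y → s(x, y) ∈ c.edges

/-- `v` is avoidable: every extension of `v` is contained in an induced cycle. -/
def Avoidable (G : SimpleGraph V) (v : V) : Prop :=
  ∀ a b, IsExtension G v a b →
    ∃ (w : V) (c : G.Walk w w), IsInducedCycle G c ∧
      a ∈ c.support ∧ v ∈ c.support ∧ b ∈ c.support

/-- `A` is an asteroidal set of `G`. -/
def IsAsteroidal (G : SimpleGraph V) (A : Set V) : Prop :=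
  ∀ a ∈ A, ∀ x ∈ A, ∀ y ∈ A, x ≠ a → y ≠ a →
    ReachOutside G (closedNbhd G a) x y

/-- `G` is AT-free: it has no asteroidal triple. -/
def ATFree (G : SimpleGraph V) : Prop :=
  ¬ ∃ A : Set V, IsAsteroidal G A ∧ A.ncard = 3

/-- `G` has exactly the two moplexes `U` and `W`. -/
def HasExactlyTwoMoplexes (G : SimpleGraph V) (U W : Set V) : Prop :=
  IsMoplex G U ∧ IsMoplex G W ∧ U ≠ W ∧ ∀ X, IsMoplex G X → X = U ∨ X = W

/-- `G` is not complete. -/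
def NonComplete (G : SimpleGraph V) : Prop :=
  ∃ x y : V, x ≠ y ∧ ¬ G.Adj x y

/-!
A moplex can be found inside any full component `A` of a minimal separator: take `A`
inclusion-minimal among all full components of minimal separators. For `x ∈ A`, any component
`D` of `G - N[x]` gives the minimal separator `N(D) ⊆ N(x)`, whose full component containing `x`
or `D` itself is again a full component of a minimal separator; minimality forces `x` to see
both the whole neighbourhood of `A` and the whole of `A`, so `A` is a moplex.

If `N(X)` contained non-adjacent `x, y`, the same construction would separate `x` from `y` by a
minimal separator with full components on both sides, each containing a moplex different from
`X`; together with `X` this gives three moplexes. Two distinct moplexes are disjoint, since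
otherwise their union would be a larger clique module.
-/

section

variable {G : SimpleGraph V} {S T A B D P U W X : Set V} {u v w x y : V}

namespace ReachOutside

theorem refl (hu : u ∉ S) : ReachOutside G S u u :=
  ⟨Walk.nil, by simpa using hu⟩

theorem symm (h : ReachOutside G S u v) : ReachOutside G S v u := by
  obtain ⟨p, hp⟩ := h
  exact ⟨p.reverse, by simpa using hp⟩

theorem trans (h : ReachOutside G S u v) (h' : ReachOutside G S v w) :
    ReachOutside G S u w := by
  obtain ⟨p, hp⟩ := h
  obtain ⟨q, hq⟩ := h'
  refine ⟨p.append q, fun x hx => ?_⟩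
  rw [Walk.mem_support_append_iff] at hx
  exact hx.elim (hp x) (hq x)

theorem mono (h : ReachOutside G S u v) (hTS : T ⊆ S) : ReachOutside G T u v := by
  obtain ⟨p, hp⟩ := h
  exact ⟨p, fun x hx hxT => hp x hx (hTS hxT)⟩

theorem left_notMem (h : ReachOutside G S u v) : u ∉ S := by
  obtain ⟨p, hp⟩ := h
  exact hp u p.start_mem_support

theorem right_notMem (h : ReachOutside G S u v) : v ∉ S :=
  h.symm.left_notMem

theorem trans_adj (h : ReachOutside G S u v) (hvw : G.Adj v w) (hw : w ∉ S) :
    ReachOutside G S u w :=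
  h.trans ⟨hvw.toWalk, by simp [h.right_notMem, hw]⟩

theorem mem_of_setNbhd_subset (h : ReachOutside G S u v) (hAS : setNbhd G A ⊆ S)
    (hu : u ∈ A) : v ∈ A := by
  obtain ⟨p, hp⟩ := h
  induction p with
  | nil => exact hu
  | cons hadj p ih =>
    refine ih ?_ fun x hx => hp x (List.mem_cons_of_mem _ hx)
    by_contra hb
    exact hp _ (by simp) (hAS ⟨hb, _, hu, hadj.symm⟩)

end ReachOutside

def ConnectedWithin (G : SimpleGraph V) (A : Set V) : Prop :=
  ∀ a ∈ A, ∀ b ∈ A, ReachOutside G Aᶜ a b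

def outsideComponent (G : SimpleGraph V) (S : Set V) (u : V) : Set V :=
  {v | ReachOutside G S u v}

/-- With `setNbhd G A = S`, a connected `A` is a component of `G - S` adjacent to all of `S`. -/
def IsFullComponent (G : SimpleGraph V) (S A : Set V) : Prop :=
  A.Nonempty ∧ ConnectedWithin G A ∧ setNbhd G A = S

/-- `S` is then a minimal separator by `isMinimalSeparator_of_isFullComponent`. -/
def IsFullComponentOfMinSep (G : SimpleGraph V) (A : Set V) : Prop :=
  ∃ S B, Disjoint A B ∧ IsFullComponent G S A ∧ IsFullComponent G S B

theorem notMem_setNbhd_self (hv : v ∈ A) : v ∉ setNbhd G A :=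
  fun h => h.1 hv

theorem setNbhd_subset_union_of_subset (h : B ⊆ D) : setNbhd G B ⊆ D ∪ setNbhd G D := by
  rintro v ⟨-, b, hb, hadj⟩
  by_cases hv : v ∈ D
  · exact Or.inl hv
  · exact Or.inr ⟨hv, b, h hb, hadj⟩

theorem IsModule.adj_of_adj (hM : IsModule G X) (hv : v ∉ X) (hx : x ∈ X) (hy : y ∈ X)
    (h : G.Adj v x) : G.Adj v y :=
  (hM v hv).elim (fun hall => hall y hy) (fun hnone => absurd h (hnone x hx))

theorem ConnectedWithin.subset_of_disjoint_setNbhd (hP : ConnectedWithin G P) (hpP : u ∈ P)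
    (hpD : u ∈ D) (h : Disjoint P (setNbhd G D)) : P ⊆ D :=
  fun _ hv => (hP u hpP _ hv).mem_of_setNbhd_subset h.symm.subset_compl_right hpD

theorem mem_outsideComponent_self (hu : u ∉ S) : u ∈ outsideComponent G S u :=
  ReachOutside.refl hu

theorem disjoint_outsideComponent : Disjoint (outsideComponent G S u) S :=
  Set.disjoint_left.2 fun _ h => ReachOutside.right_notMem h

theorem setNbhd_outsideComponent_subset : setNbhd G (outsideComponent G S u) ⊆ S := by
  rintro v ⟨hv, x, hx, hadj⟩
  by_contra hvS
  exact hv (ReachOutside.trans_adj hx hadj.symm hvS)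

theorem connectedWithin_outsideComponent : ConnectedWithin G (outsideComponent G S u) := by
  classical
  intro a ha b hb
  obtain ⟨p, hp⟩ := ReachOutside.trans (ReachOutside.symm ha) hb
  refine ⟨p, fun x hx => ?_⟩
  rw [Set.notMem_compl_iff]
  exact ReachOutside.trans ha
    ⟨p.takeUntil x hx, fun y hy => hp y (p.support_takeUntil_subset_support hx hy)⟩

theorem IsFullComponent.disjoint (hA : IsFullComponent G S A) : Disjoint A S :=
  hA.2.2 ▸ Set.disjoint_left.2 fun _ hv => notMem_setNbhd_self hv

theorem IsFullComponent.not_adj (hAB : Disjoint A B) (hA : IsFullComponent G S A)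
    (hB : IsFullComponent G S B) (ha : u ∈ A) (hb : v ∈ B) : ¬ G.Adj u v := fun hadj =>
  hB.disjoint.ne_of_mem hb (hA.2.2 ▸ ⟨fun hvA => hAB.ne_of_mem hvA hb rfl, u, ha, hadj.symm⟩) rfl

theorem isFullComponent_outsideComponent (hS : S ⊆ G.neighborSet x) :
    IsFullComponent G S (outsideComponent G S x) := by
  have hx : x ∈ outsideComponent G S x :=
    mem_outsideComponent_self fun h => G.irrefl (hS h)
  refine ⟨⟨x, hx⟩, connectedWithin_outsideComponent,
    setNbhd_outsideComponent_subset.antisymm fun s hs => ?_⟩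
  exact ⟨fun h => disjoint_outsideComponent.ne_of_mem h hs rfl, x, hx, (hS hs).symm⟩

theorem isMinimalSeparator_of_isFullComponent (hAB : Disjoint A B) (hA : IsFullComponent G S A)
    (hB : IsFullComponent G S B) : IsMinimalSeparator G S := by
  obtain ⟨a, ha⟩ := hA.1
  obtain ⟨b, hb⟩ := hB.1
  have haS : a ∉ S := fun h => hA.disjoint.ne_of_mem ha h rfl
  have hbS : b ∉ S := fun h => hB.disjoint.ne_of_mem hb h rfl
  refine ⟨a, b, hAB.ne_of_mem ha hb, ⟨hA.not_adj hAB hB ha hb, haS, hbS, fun hab => ?_⟩, ?_⟩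
  · exact hAB.ne_of_mem (hab.mem_of_setNbhd_subset hA.2.2.le ha) hb rfl
  · rintro T hTS ⟨-, -, -, hab⟩
    obtain ⟨s, hsS, hsT⟩ := Set.exists_of_ssubset hTS
    obtain ⟨-, a', ha', hsa⟩ := (hA.2.2 ▸ hsS : s ∈ setNbhd G A)
    obtain ⟨-, b', hb', hsb⟩ := (hB.2.2 ▸ hsS : s ∈ setNbhd G B)
    have hTA : T ⊆ Aᶜ := hTS.le.trans hA.disjoint.symm.subset_compl_right
    have hTB : T ⊆ Bᶜ := hTS.le.trans hB.disjoint.symm.subset_compl_right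
    -- the path `a ⇝ a' - s - b' ⇝ b` avoids `T` since `s` is the only vertex of `S` on it
    exact hab <| (((hA.2.1 a ha a' ha').mono hTA).trans_adj hsa.symm hsT).trans_adj hsb
      (fun h => hTB h hb') |>.trans ((hB.2.1 b' hb' b hb).mono hTB)

theorem exists_isFullComponent_of_notMem_closedNbhd (hy : y ∉ closedNbhd G x) :
    ∃ S A B, x ∈ A ∧ y ∈ B ∧ Disjoint A B ∧ IsFullComponent G S A ∧ IsFullComponent G S B ∧
      S ⊆ G.neighborSet x ∧ Disjoint B (G.neighborSet x) := by
  set D := outsideComponent G (closedNbhd G x) y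
  have hDx : Disjoint D (closedNbhd G x) := disjoint_outsideComponent
  have hSx : setNbhd G D ⊆ G.neighborSet x := by
    rintro v ⟨hvD, d, hd, hadj⟩
    have hv : v ∈ closedNbhd G x := by
      by_contra hv
      exact hvD (ReachOutside.trans_adj hd hadj.symm hv)
    rcases hv with rfl | hv
    · exact (hDx.ne_of_mem hd (Set.mem_insert_of_mem _ hadj) rfl).elim
    · exact hv
  refine ⟨setNbhd G D, outsideComponent G (setNbhd G D) x, D, ?_, mem_outsideComponent_self hy,
    ?_, isFullComponent_outsideComponent hSx,
    ⟨⟨y, mem_outsideComponent_self hy⟩, connectedWithin_outsideComponent, rfl⟩, hSx,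
    hDx.mono_right (Set.subset_insert _ _)⟩
  · exact mem_outsideComponent_self fun h => G.irrefl (hSx h)
  · refine Set.disjoint_left.2 fun v hv hvD => hDx.ne_of_mem ?_ (Set.mem_insert x _) rfl
    exact (ReachOutside.symm hv).mem_of_setNbhd_subset le_rfl hvD

theorem isMoplex_of_isFullComponent (hAB : Disjoint A B) (hA : IsFullComponent G S A)
    (hB : IsFullComponent G S B) (hcl : G.IsClique A) (hAS : ∀ x ∈ A, S ⊆ G.neighborSet x) :
    IsMoplex G A := by
  obtain ⟨a, ha⟩ := hA.1
  have hmod : IsModule G A := fun v hv => by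
    by_cases hvS : v ∈ S
    · exact Or.inl fun x hx => (hAS x hx hvS).symm
    · exact Or.inr fun x hx hadj => hvS (hA.2.2 ▸ ⟨hv, x, hx, hadj⟩)
  refine ⟨⟨a, ha⟩, ⟨hcl, hmod⟩, fun Y hAY ⟨hYcl, hYmod⟩ => ?_,
    Or.inr (hA.2.2 ▸ isMinimalSeparator_of_isFullComponent hAB hA hB)⟩
  refine (Set.Subset.antisymm (fun y hy => ?_) hAY)
  by_contra hyA
  have hya : G.Adj y a := hYcl hy (hAY ha) fun h => hyA (h ▸ ha)
  obtain ⟨-, b, hb, hyb⟩ := (hB.2.2 ▸ hA.2.2 ▸ ⟨hyA, a, ha, hya⟩ : y ∈ setNbhd G B)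
  have hab := hA.not_adj hAB hB ha hb
  have hbY : b ∉ Y := fun hbY => hab (hYcl (hAY ha) hbY (hAB.ne_of_mem ha hb))
  exact hab (hYmod.adj_of_adj hbY hy (hAY ha) hyb.symm).symm

theorem subset_neighborSet_of_minimal (hmin : Minimal (IsFullComponentOfMinSep G) A)
    (hAB : Disjoint A B) (hA : IsFullComponent G S A) (hB : IsFullComponent G S B) (hx : x ∈ A) :
    S ⊆ G.neighborSet x := by
  obtain ⟨b, hb⟩ := hB.1
  have hbx : b ∉ closedNbhd G x := by
    rintro (rfl | hxb)
    · exact hAB.ne_of_mem hx hb rfl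
    · exact hA.not_adj hAB hB hx hb hxb
  obtain ⟨S', P, D, hxP, hbD, hPD, hP, hD, hS'x, -⟩ :=
    exists_isFullComponent_of_notMem_closedNbhd hbx
  have hBD : B ⊆ D := hB.2.1.subset_of_disjoint_setNbhd hb hbD <| hD.2.2 ▸
    Set.disjoint_left.2 fun v hv hvS' => hA.not_adj hAB hB hx hv (hS'x hvS')
  have hSDS' : S ⊆ D ∪ S' := hB.2.2 ▸ hD.2.2 ▸ setNbhd_subset_union_of_subset hBD
  have hPA : P ⊆ A := hP.2.1.subset_of_disjoint_setNbhd hxP hx <| hA.2.2 ▸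
    Set.disjoint_of_subset_right hSDS' (Set.disjoint_union_right.2 ⟨hPD, hP.disjoint⟩)
  have hPeq : P = A := hmin.eq_of_subset ⟨S', D, hPD, hP, hD⟩ hPA
  calc S = S' := hA.2.2.symm.trans (hPeq ▸ hP.2.2)
    _ ⊆ G.neighborSet x := hS'x

theorem isClique_of_minimal (hmin : Minimal (IsFullComponentOfMinSep G) A)
    (hAB : Disjoint A B) (hA : IsFullComponent G S A) (hB : IsFullComponent G S B) :
    G.IsClique A := by
  intro x hx y hy hxy
  by_contra hadj
  have hyx : y ∉ closedNbhd G x := by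
    rintro (rfl | h)
    · exact hxy rfl
    · exact hadj h
  obtain ⟨S', P, D, hxP, hyD, hPD, hP, hD, -, hDx⟩ :=
    exists_isFullComponent_of_notMem_closedNbhd hyx
  have hDA : D ⊆ A := hD.2.1.subset_of_disjoint_setNbhd hyD hy <| hA.2.2 ▸
    hDx.mono_right (subset_neighborSet_of_minimal hmin hAB hA hB hx)
  have hDeq : D = A := hmin.eq_of_subset ⟨S', P, hPD.symm, hD, hP⟩ hDA
  exact hPD.ne_of_mem hxP (hDeq ▸ hx) rfl

theorem isMoplex_of_minimal (hmin : Minimal (IsFullComponentOfMinSep G) A) : IsMoplex G A := by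
  obtain ⟨S, B, hAB, hA, hB⟩ := hmin.prop
  exact isMoplex_of_isFullComponent hAB hA hB (isClique_of_minimal hmin hAB hA hB)
    fun _ hx => subset_neighborSet_of_minimal hmin hAB hA hB hx

theorem IsFullComponentOfMinSep.exists_isMoplex_subset [Finite V]
    (hA : IsFullComponentOfMinSep G A) : ∃ X, IsMoplex G X ∧ X ⊆ A := by
  obtain ⟨X, hXA, hX⟩ := exists_minimal_le_of_wellFoundedLT _ A hA
  exact ⟨X, isMoplex_of_minimal hX, hXA⟩

theorem disjoint_setNbhd_of_subset (hPD : Disjoint P D) (hP : IsFullComponent G S P)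
    (hD : IsFullComponent G S D) (hXP : X ⊆ P) : Disjoint (setNbhd G X) D :=
  Set.disjoint_of_subset_left (hP.2.2 ▸ setNbhd_subset_union_of_subset hXP)
    (Set.disjoint_union_left.2 ⟨hPD, hD.disjoint.symm⟩)

theorem exists_isMoplex_ne_of_not_isClique_setNbhd [Finite V]
    (hX : ¬ G.IsClique (setNbhd G X)) :
    ∃ X₁ X₂, IsMoplex G X₁ ∧ IsMoplex G X₂ ∧ X₁ ≠ X₂ ∧ X₁ ≠ X ∧ X₂ ≠ X := by
  obtain ⟨x, hx, y, hy, hxy, hadj⟩ :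
      ∃ x ∈ setNbhd G X, ∃ y ∈ setNbhd G X, x ≠ y ∧ ¬ G.Adj x y := by
    simpa [isClique_iff, Set.Pairwise] using hX
  have hyx : y ∉ closedNbhd G x := by
    rintro (rfl | h)
    · exact hxy rfl
    · exact hadj h
  obtain ⟨S, P, D, hxP, hyD, hPD, hP, hD, -⟩ := exists_isFullComponent_of_notMem_closedNbhd hyx
  obtain ⟨X₁, hX₁, hX₁P⟩ := IsFullComponentOfMinSep.exists_isMoplex_subset ⟨S, D, hPD, hP, hD⟩
  obtain ⟨X₂, hX₂, hX₂D⟩ :=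
    IsFullComponentOfMinSep.exists_isMoplex_subset ⟨S, P, hPD.symm, hD, hP⟩
  refine ⟨X₁, X₂, hX₁, hX₂, ?_, ?_, ?_⟩
  · rintro rfl
    obtain ⟨z, hz⟩ := hX₁.1
    exact hPD.ne_of_mem (hX₁P hz) (hX₂D hz) rfl
  · rintro rfl
    exact (disjoint_setNbhd_of_subset hPD hP hD hX₁P).ne_of_mem hy hyD rfl
  · rintro rfl
    exact (disjoint_setNbhd_of_subset hPD.symm hD hP hX₂D).ne_of_mem hx hxP rfl

theorem IsCliqueModule.union (hU : IsCliqueModule G U) (hW : IsCliqueModule G W) (hvU : v ∈ U)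
    (hvW : v ∈ W) : IsCliqueModule G (U ∪ W) := by
  refine ⟨Set.pairwise_union.2 ⟨hU.1, hW.1, fun x hx y hy hxy => ?_⟩, fun z hz => ?_⟩
  · have hxy' : G.Adj x y := by
      by_cases hyU : y ∈ U
      · exact hU.1 hx hyU hxy
      · exact (hU.2.adj_of_adj hyU hvU hx (hW.1 hy hvW fun h => hyU (h ▸ hvU))).symm
    exact ⟨hxy', hxy'.symm⟩
  · obtain ⟨hzU, hzW⟩ := not_or.1 hz
    by_cases hzv : G.Adj z v
    · exact Or.inl fun x hx =>
        hx.elim (hU.2.adj_of_adj hzU hvU · hzv) (hW.2.adj_of_adj hzW hvW · hzv)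
    · exact Or.inr fun x hx hzx => hzv <|
        hx.elim (hU.2.adj_of_adj hzU · hvU hzx) (hW.2.adj_of_adj hzW · hvW hzx)

theorem IsMoplex.disjoint (hU : IsMoplex G U) (hW : IsMoplex G W) (hUW : U ≠ W) :
    Disjoint U W := by
  refine Set.disjoint_left.2 fun v hvU hvW => hUW ?_
  have hUW' := hU.2.1.union hW.2.1 hvU hvW
  exact (hU.2.2.1 _ Set.subset_union_left hUW').symm.trans
    (hW.2.2.1 _ Set.subset_union_right hUW')

end

theorem twoMoplexes_disjoint_simplicial_general {V : Type*} [Fintype V] (G : SimpleGraph V)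
    (U W : Set V) (h : HasExactlyTwoMoplexes G U W) :
    Disjoint U W ∧ G.IsClique (setNbhd G U) ∧ G.IsClique (setNbhd G W) := by
  obtain ⟨hU, hW, hUW, hall⟩ := h
  have hsimplicial : ∀ X, IsMoplex G X → G.IsClique (setNbhd G X) := by
    intro X hX
    by_contra hX'
    obtain ⟨X₁, X₂, h₁, h₂, h₁₂, h₁X, h₂X⟩ := exists_isMoplex_ne_of_not_isClique_setNbhd hX'
    rcases hall X hX with rfl | rfl <;> rcases hall X₁ h₁ with rfl | rfl <;>
      rcases hall X₂ h₂ with rfl | rfl <;> simp_all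
  exact ⟨hU.disjoint hW hUW, hsimplicial U hU, hsimplicial W hW⟩

/-- In a non-complete graph with exactly two moplexes `U` and `W`, the moplexes are
disjoint and both are simplicial (their neighbourhoods are cliques). -/
theorem twoMoplexes_disjoint_simplicial {V : Type*} [Fintype V] (G : SimpleGraph V)
    (U W : Set V) (hnc : NonComplete G) (h : HasExactlyTwoMoplexes G U W) :
    Disjoint U W ∧ G.IsClique (setNbhd G U) ∧ G.IsClique (setNbhd G W) :=
  twoMoplexes_disjoint_simplicial_general G U W h
end MoplexPaper
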